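/- Assume the stacked (m+q)×n matrix [F_k; H_k] has rank n for every k = 0,…,N+1. Then the functional J_{N+1}({x_k}_{k=0}^{N+1}) = Σ_{k=0}^{N+1} [ (Q_{k−1}(F_k x_k − C_{k−1} x_{k−1}), F_k x_k − C_{k−1} x_{k−1}) + (R_k(y_k − H_k x_k), y_k − H_k x_k) ], where by convention C_{−1} = 0 and x_{−1} = 0, has a unique minimizer over (ℝ^n)^{N+2}. -/

import Mathlib

open Matrix

/-- The functional `J_{N+1}({x_k}) = Σ_{k=0}^{N+1} ‖F_k x_k - C_{k-1} x_{k-1}‖²_{Q_{k-1}}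
+ ‖y_k - H_k x_k‖²_{R_k}` with the convention `C_{-1} = 0`, `x_{-1} = 0`.
Index shift: `Q j` stands for `Q_{j-1}`. -/
def Jsmooth {N m n q : ℕ} (F : Fin (N + 2) → Matrix (Fin m) (Fin n) ℝ)
    (C : Fin (N + 1) → Matrix (Fin m) (Fin n) ℝ)
    (H : Fin (N + 2) → Matrix (Fin q) (Fin n) ℝ)
    (Q : Fin (N + 2) → Matrix (Fin m) (Fin m) ℝ)
    (R : Fin (N + 2) → Matrix (Fin q) (Fin q) ℝ)
    (y : Fin (N + 2) → Fin q → ℝ)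
    (x : Fin (N + 2) → Fin n → ℝ) : ℝ :=
  ((Q 0 *ᵥ (F 0 *ᵥ x 0)) ⬝ᵥ (F 0 *ᵥ x 0) +
      (R 0 *ᵥ (y 0 - H 0 *ᵥ x 0)) ⬝ᵥ (y 0 - H 0 *ᵥ x 0)) +
    ∑ k : Fin (N + 1),
      ((Q k.succ *ᵥ (F k.succ *ᵥ x k.succ - C k *ᵥ x k.castSucc)) ⬝ᵥ
          (F k.succ *ᵥ x k.succ - C k *ᵥ x k.castSucc) +
        (R k.succ *ᵥ (y k.succ - H k.succ *ᵥ x k.succ)) ⬝ᵥ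
          (y k.succ - H k.succ *ᵥ x k.succ))

/-! `J_{N+1}` is a weighted least-squares functional: a sum of positive definite quadratic forms
`(M_i (A_i x - b_i), A_i x - b_i)` of affine residuals of `x`. Its quadratic part
`Σ_i (M_i A_i x, A_i x)` is positive definite because the residual maps are jointly injective: if
all residuals vanish, the rank condition recovers `x_0 = 0` from `F_0 x_0 = H_0 x_0 = 0`, and then
forward in time `x_k = 0` from `F_k x_k = C_{k-1} x_{k-1} = 0` and `H_k x_k = 0`. Completing the
square around the solution of the normal equations then exhibits the unique minimizer. -/

theorem Matrix.IsSymm.dotProduct_mulVec_comm {n R : Type*} [Fintype n] [CommSemiring R]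
    {M : Matrix n n R} (hM : M.IsSymm) (v w : n → R) : v ⬝ᵥ M *ᵥ w = w ⬝ᵥ M *ᵥ v := by
  rw [dotProduct_mulVec, ← mulVec_transpose, hM.eq, dotProduct_comm]

theorem Matrix.mulVec_injective_of_rank_eq_card {m n K : Type*} [Fintype n] [Field K]
    {A : Matrix m n K} (h : A.rank = Fintype.card n) : Function.Injective A.mulVec := by
  rw [mulVec_injective_iff, linearIndependent_iff_card_eq_finrank_span, Set.finrank,
    ← rank_eq_finrank_span_cols, h]

namespace LinearMap.BilinForm

variable {V : Type*} [AddCommGroup V] [Module ℝ V]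

theorem existsUnique_forall_le_of_posDef [FiniteDimensional ℝ V] {B : LinearMap.BilinForm ℝ V}
    (hB : B.IsSymm) (hpos : B.toQuadraticMap.PosDef) (ℓ : Module.Dual ℝ V) (c : ℝ)
    {f : V → ℝ} (hf : ∀ x, f x = B x x - 2 * ℓ x + c) :
    ∃! x₀, ∀ x, f x₀ ≤ f x := by
  have hnd : B.Nondegenerate := hB.isRefl.nondegenerate_iff_separatingLeft.mpr
    (separatingLeft_of_anisotropic hpos.anisotropic)
  set x₀ := (B.toDual hnd).symm ℓ
  have hx₀ : ∀ v, B x₀ v = ℓ v := apply_toDual_symm_apply ℓ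
  have hsq : ∀ x, f x = f x₀ + B (x - x₀) (x - x₀) := fun x => by
    simp only [hf, map_sub, LinearMap.sub_apply, hx₀, hB.eq x x₀]
    ring
  have hnn : ∀ v, 0 ≤ B v v := hpos.nonneg
  refine ⟨x₀, fun x => ?_, fun x hx => ?_⟩
  · rw [hsq x]
    linarith [hnn (x - x₀)]
  · by_contra hne
    have hlt : 0 < B (x - x₀) (x - x₀) := hpos _ (sub_ne_zero.mpr hne)
    linarith [hx x₀, hsq x]

end LinearMap.BilinForm

section WeightedLeastSquares

variable {ι V : Type*} [Fintype ι] [AddCommGroup V] [Module ℝ V] {p : ι → Type*}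
  [∀ i, Fintype (p i)]

def weightedGramForm (M : ∀ i, Matrix (p i) (p i) ℝ) (A : ∀ i, V →ₗ[ℝ] p i → ℝ) :
    LinearMap.BilinForm ℝ V :=
  ∑ i, (dotProductBilin ℝ ℝ).compl₁₂ (A i) ((M i).mulVecLin ∘ₗ A i)

variable {M : ∀ i, Matrix (p i) (p i) ℝ} {A : ∀ i, V →ₗ[ℝ] p i → ℝ}

@[simp] theorem weightedGramForm_apply (x z : V) :
    weightedGramForm M A x z = ∑ i, A i x ⬝ᵥ M i *ᵥ A i z := by
  simp [weightedGramForm]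

theorem weightedGramForm_isSymm (hM : ∀ i, (M i).IsSymm) : (weightedGramForm M A).IsSymm :=
  ⟨fun x z => by simp only [weightedGramForm_apply, (hM _).dotProduct_mulVec_comm (A _ x)]⟩

theorem weightedGramForm_posDef (hM : ∀ i, (M i).PosDef) (hA : ∀ x, (∀ i, A i x = 0) → x = 0) :
    (weightedGramForm M A).toQuadraticMap.PosDef := by
  intro x hx
  obtain ⟨i, hi⟩ : ∃ i, A i x ≠ 0 := by
    by_contra! h
    exact hx (hA x h)
  rw [LinearMap.BilinMap.toQuadraticMap_apply, weightedGramForm_apply]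
  refine Finset.sum_pos' (fun j _ => ?_) ⟨i, Finset.mem_univ i, ?_⟩
  · simpa using (hM j).posSemidef.dotProduct_mulVec_nonneg (A j x)
  · simpa using (hM i).dotProduct_mulVec_pos hi

theorem existsUnique_forall_le_sum_weightedResidual [FiniteDimensional ℝ V]
    (hM : ∀ i, (M i).PosDef) (hA : ∀ x, (∀ i, A i x = 0) → x = 0) (b : ∀ i, p i → ℝ) :
    ∃! x₀, ∀ x, ∑ i, (A i x₀ - b i) ⬝ᵥ M i *ᵥ (A i x₀ - b i)
      ≤ ∑ i, (A i x - b i) ⬝ᵥ M i *ᵥ (A i x - b i) := by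
  have hsymm i : (M i).IsSymm := isHermitian_iff_isSymm.mp (hM i).1
  refine (weightedGramForm M A).existsUnique_forall_le_of_posDef
    (weightedGramForm_isSymm hsymm) (weightedGramForm_posDef hM hA)
    (∑ i, dotProductBilin ℝ ℝ (b i) ∘ₗ (M i).mulVecLin ∘ₗ A i) (∑ i, b i ⬝ᵥ M i *ᵥ b i)
    fun x => ?_
  simp only [weightedGramForm_apply, LinearMap.coe_sum, Finset.sum_apply,
    LinearMap.comp_apply, dotProductBilin_apply_apply, Matrix.mulVecLin_apply, Finset.mul_sum,
    ← Finset.sum_sub_distrib, ← Finset.sum_add_distrib]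
  refine Finset.sum_congr rfl fun i _ => ?_
  rw [mulVec_sub, dotProduct_sub, sub_dotProduct, sub_dotProduct,
    (hsymm i).dotProduct_mulVec_comm (A i x) (b i)]
  ring

end WeightedLeastSquares

section Smoothing

variable {N m n q : ℕ} (F : Fin (N + 2) → Matrix (Fin m) (Fin n) ℝ)
  (C : Fin (N + 1) → Matrix (Fin m) (Fin n) ℝ) (H : Fin (N + 2) → Matrix (Fin q) (Fin n) ℝ)
  (Q : Fin (N + 2) → Matrix (Fin m) (Fin m) ℝ) (R : Fin (N + 2) → Matrix (Fin q) (Fin q) ℝ)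
  (y : Fin (N + 2) → Fin q → ℝ)

def stateResidual : Fin (N + 2) → (Fin (N + 2) → Fin n → ℝ) →ₗ[ℝ] Fin m → ℝ :=
  Fin.cases ((F 0).mulVecLin ∘ₗ LinearMap.proj 0) fun k =>
    (F k.succ).mulVecLin ∘ₗ LinearMap.proj k.succ - (C k).mulVecLin ∘ₗ LinearMap.proj k.castSucc

/-- `inl k` indexes the state residual at time `k`, `inr k` the observation residual. -/
abbrev residualDim (N m q : ℕ) : Fin (N + 2) ⊕ Fin (N + 2) → ℕ
  | .inl _ => m
  | .inr _ => q

def smoothingWeight : ∀ i, Matrix (Fin (residualDim N m q i)) (Fin (residualDim N m q i)) ℝ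
  | .inl k => Q k
  | .inr k => R k

def smoothingMap : ∀ i, (Fin (N + 2) → Fin n → ℝ) →ₗ[ℝ] Fin (residualDim N m q i) → ℝ
  | .inl k => stateResidual F C k
  | .inr k => (H k).mulVecLin ∘ₗ LinearMap.proj k

def smoothingTarget : ∀ i, Fin (residualDim N m q i) → ℝ
  | .inl _ => 0
  | .inr k => y k

theorem jsmooth_eq_sum_weightedResidual (x : Fin (N + 2) → Fin n → ℝ) :
    Jsmooth F C H Q R y x = ∑ i, (smoothingMap F C H i x - smoothingTarget y i) ⬝ᵥ
      smoothingWeight Q R i *ᵥ (smoothingMap F C H i x - smoothingTarget y i) := by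
  have hobs : ∀ (k : Fin (N + 2)) (v : Fin q → ℝ),
      (v - y k) ⬝ᵥ R k *ᵥ (v - y k) = R k *ᵥ (y k - v) ⬝ᵥ (y k - v) := fun k v => by
    rw [← neg_sub (y k), mulVec_neg, dotProduct_neg, neg_dotProduct, neg_neg, dotProduct_comm]
  simp only [Jsmooth, Fintype.sum_sum_type, Fin.sum_univ_succ (n := N + 1), smoothingMap,
    smoothingTarget, smoothingWeight, stateResidual, Fin.cases_zero, Fin.cases_succ,
    LinearMap.comp_apply, LinearMap.sub_apply, Matrix.mulVecLin_apply, LinearMap.proj_apply,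
    sub_zero, hobs, dotProduct_comm _ (Q _ *ᵥ _), Finset.sum_add_distrib]
  ring

theorem eq_zero_of_forall_smoothingMap_eq_zero (hrank : ∀ k, (fromRows (F k) (H k)).rank = n)
    (x : Fin (N + 2) → Fin n → ℝ) (hx : ∀ i, smoothingMap F C H i x = 0) : x = 0 := by
  have hobservable k v (hF : F k *ᵥ v = 0) (hH : H k *ᵥ v = 0) : v = 0 :=
    mulVec_injective_of_rank_eq_card (by simpa using hrank k) (by simp [fromRows_mulVec, hF, hH])
  funext k
  induction k using Fin.induction with
  | zero => exact hobservable 0 _ (hx (.inl 0)) (hx (.inr 0))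
  | succ k ih =>
    refine hobservable k.succ _ ?_ (hx (.inr k.succ))
    simpa [smoothingMap, stateResidual, ih] using hx (.inl k.succ)

end Smoothing

/-- if `rank [F_k; H_k] = n` for every k = 0,…,N+1, then the
functional `J_{N+1}` has a unique minimizer over `(ℝⁿ)^{N+2}`. -/
theorem stmt17 {N m n q : ℕ}
    (F : Fin (N + 2) → Matrix (Fin m) (Fin n) ℝ)
    (C : Fin (N + 1) → Matrix (Fin m) (Fin n) ℝ)
    (H : Fin (N + 2) → Matrix (Fin q) (Fin n) ℝ)
    (Q : Fin (N + 2) → Matrix (Fin m) (Fin m) ℝ)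
    (R : Fin (N + 2) → Matrix (Fin q) (Fin q) ℝ)
    (y : Fin (N + 2) → Fin q → ℝ)
    (hQ : ∀ j, (Q j).PosDef) (hR : ∀ k, (R k).PosDef)
    (hrank : ∀ k : Fin (N + 2), (Matrix.fromRows (F k) (H k)).rank = n) :
    ∃! xh : Fin (N + 2) → Fin n → ℝ,
      ∀ x : Fin (N + 2) → Fin n → ℝ, Jsmooth F C H Q R y xh ≤ Jsmooth F C H Q R y x := by
  have hweight : ∀ i, (smoothingWeight Q R i).PosDef
    | .inl k => hQ k
    | .inr k => hR k
  simpa only [← jsmooth_eq_sum_weightedResidual] using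
    existsUnique_forall_le_sum_weightedResidual hweight
      (eq_zero_of_forall_smoothingMap_eq_zero F C H hrank) (smoothingTarget y)
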